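/- arXiv:2007.12447 — 5 statements merged into one kernel-verified Lean document; each statement's English description precedes it below -/
import Mathlib

section
/- Nine-point circle (midpoints of sides): in any triangle ABC, the midpoints of the three sides and the feet of the three altitudes all lie on a common circle. -/
open RealInnerProductSpace

/-- Key lemma: if `D = B + t•(C-B)` is on line `BC`, `AD ⟂ BC`, and `O` is equidistant
from `B` and `C`, then `D` is at distance `‖(O-A)/2‖` from `N = (A+B+C-O)/2`. -/
lemma foot_dist_nine_point {V : Type*} [NormedAddCommGroup V] [InnerProductSpace ℝ V]
    (A B C O D : V) (t : ℝ) (hDt : D - B = t • (C - B))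
    (hperp : ⟪A - D, C - B⟫ = 0) (hO : ‖O - B‖ = ‖O - C‖) :
    ‖D - (2:ℝ)⁻¹ • (A + B + C - O)‖ = ‖(2:ℝ)⁻¹ • (O - A)‖ := by
  set N : V := (2:ℝ)⁻¹ • (A + B + C - O) with hN
  set M : V := (2:ℝ)⁻¹ • (B + C) with hM
  have hMN : M - N = (2:ℝ)⁻¹ • (O - A) := by rw [hN, hM]; module
  -- perpendicular bisector fact: ⟪O - M, C - B⟫ = 0
  have h1 : ⟪O - B, O - B⟫ = ⟪O - C, O - C⟫ := by
    rw [real_inner_self_eq_norm_mul_norm, real_inner_self_eq_norm_mul_norm, hO]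
  have hOM : O - M = (2:ℝ)⁻¹ • ((O - B) + (O - C)) := by rw [hM]; module
  have hCB : C - B = (O - B) - (O - C) := by abel
  have h2 : ⟪O - M, C - B⟫ = 0 := by
    have hc : ⟪O - C, O - B⟫ = ⟪O - B, O - C⟫ := real_inner_comm _ _
    rw [hOM, hCB, inner_smul_left]
    simp only [inner_add_left, inner_sub_right, conj_trivial] at h1 hc ⊢
    linarith [h1, hc]
  have h3 : ⟪D - A, C - B⟫ = 0 := by
    have : D - A = -(A - D) := by abel
    rw [this, inner_neg_left, hperp, neg_zero]
  -- the chord argument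
  have hsum : (D - N) + (M - N) = (D - A) + (O - M) := by rw [hN, hM]; module
  have hdiff : (D - N) - (M - N) = (t - (2:ℝ)⁻¹) • (C - B) := by
    have e1 : (D - N) - (M - N) = D - M := by abel
    have e2 : D - M = (D - B) + (2:ℝ)⁻¹ • (B - C) := by rw [hM]; module
    rw [e1, e2, hDt]; module
  have key : ⟪(D - N) + (M - N), (D - N) - (M - N)⟫ = 0 := by
    rw [hsum, hdiff, inner_smul_right, inner_add_left, h3, h2]
    ring
  have hid : ∀ x y : V, ⟪x + y, x - y⟫ = ⟪x, x⟫ - ⟪y, y⟫ := by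
    intro x y
    rw [inner_add_left, inner_sub_right, inner_sub_right, real_inner_comm y x]
    ring
  have hnorm : ⟪D - N, D - N⟫ = ⟪M - N, M - N⟫ := by
    rw [hid] at key
    linarith
  have : ‖D - N‖ ^ 2 = ‖M - N‖ ^ 2 := by
    rw [← real_inner_self_eq_norm_sq, ← real_inner_self_eq_norm_sq, hnorm]
  have h4 : ‖D - N‖ = ‖M - N‖ := by
    have := congrArg Real.sqrt this
    rwa [Real.sqrt_sq (norm_nonneg _), Real.sqrt_sq (norm_nonneg _)] at this
  rw [h4, hMN]

theorem nine_point_circle_sides_and_feet (A B C D E F : EuclideanSpace ℝ (Fin 2))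
    (hABC : AffineIndependent ℝ ![A, B, C])
    (hD : D ∈ affineSpan ℝ ({B, C} : Set (EuclideanSpace ℝ (Fin 2))) ∧ ⟪A - D, C - B⟫ = 0)
    (hE : E ∈ affineSpan ℝ ({C, A} : Set (EuclideanSpace ℝ (Fin 2))) ∧ ⟪B - E, A - C⟫ = 0)
    (hF : F ∈ affineSpan ℝ ({A, B} : Set (EuclideanSpace ℝ (Fin 2))) ∧ ⟪C - F, B - A⟫ = 0) :
    ∃ (P : EuclideanSpace ℝ (Fin 2)) (r : ℝ),
      dist (midpoint ℝ B C) P = r ∧ dist (midpoint ℝ C A) P = r ∧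
      dist (midpoint ℝ A B) P = r ∧
      dist D P = r ∧ dist E P = r ∧ dist F P = r := by
  set S : Affine.Simplex ℝ (EuclideanSpace ℝ (Fin 2)) 2 := ⟨![A, B, C], hABC⟩ with hS
  set O : EuclideanSpace ℝ (Fin 2) := S.circumcenter with hO
  have hA' : dist A O = S.circumradius := S.dist_circumcenter_eq_circumradius 0
  have hB' : dist B O = S.circumradius := S.dist_circumcenter_eq_circumradius 1
  have hC' : dist C O = S.circumradius := S.dist_circumcenter_eq_circumradius 2
  have hOA : ‖O - A‖ = S.circumradius := by rw [← hA', dist_eq_norm, ← norm_neg]; congr 1; abel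
  have hOB : ‖O - B‖ = S.circumradius := by rw [← hB', dist_eq_norm, ← norm_neg]; congr 1; abel
  have hOC : ‖O - C‖ = S.circumradius := by rw [← hC', dist_eq_norm, ← norm_neg]; congr 1; abel
  set N : EuclideanSpace ℝ (Fin 2) := (2:ℝ)⁻¹ • (A + B + C - O) with hN
  refine ⟨N, S.circumradius / 2, ?_, ?_, ?_, ?_, ?_, ?_⟩
  · rw [dist_eq_norm]
    have : midpoint ℝ B C - N = (2:ℝ)⁻¹ • (O - A) := by
      rw [midpoint_eq_smul_add, invOf_eq_inv, hN]; module
    rw [this, norm_smul, hOA]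
    simp; ring
  · rw [dist_eq_norm]
    have : midpoint ℝ C A - N = (2:ℝ)⁻¹ • (O - B) := by
      rw [midpoint_eq_smul_add, invOf_eq_inv, hN]; module
    rw [this, norm_smul, hOB]
    simp; ring
  · rw [dist_eq_norm]
    have : midpoint ℝ A B - N = (2:ℝ)⁻¹ • (O - C) := by
      rw [midpoint_eq_smul_add, invOf_eq_inv, hN]; module
    rw [this, norm_smul, hOC]
    simp; ring
  · obtain ⟨t, ht⟩ : ∃ t : ℝ, D - B = t • (C - B) := by
      have h := AffineSubspace.vsub_mem_direction hD.1 (left_mem_affineSpan_pair ℝ B C)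
      rw [direction_affineSpan, mem_vectorSpan_pair_rev] at h
      obtain ⟨t, ht⟩ := h
      exact ⟨t, ht.symm⟩
    rw [dist_eq_norm]
    have := foot_dist_nine_point A B C O D t ht hD.2 (hOB.trans hOC.symm)
    rw [← hN] at this
    rw [this, norm_smul, hOA]
    simp; ring
  · obtain ⟨t, ht⟩ : ∃ t : ℝ, E - C = t • (A - C) := by
      have h := AffineSubspace.vsub_mem_direction hE.1 (left_mem_affineSpan_pair ℝ C A)
      rw [direction_affineSpan, mem_vectorSpan_pair_rev] at h
      obtain ⟨t, ht⟩ := h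
      exact ⟨t, ht.symm⟩
    rw [dist_eq_norm]
    have := foot_dist_nine_point B C A O E t ht hE.2 (hOC.trans hOA.symm)
    have hN' : (2:ℝ)⁻¹ • (B + C + A - O) = N := by rw [hN]; module
    rw [hN'] at this
    rw [this, norm_smul, hOB]
    simp; ring
  · obtain ⟨t, ht⟩ : ∃ t : ℝ, F - A = t • (B - A) := by
      have h := AffineSubspace.vsub_mem_direction hF.1 (left_mem_affineSpan_pair ℝ A B)
      rw [direction_affineSpan, mem_vectorSpan_pair_rev] at h
      obtain ⟨t, ht⟩ := h
      exact ⟨t, ht.symm⟩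
    rw [dist_eq_norm]
    have := foot_dist_nine_point C A B O F t ht hF.2 (hOA.trans hOB.symm)
    have hN' : (2:ℝ)⁻¹ • (C + A + B - O) = N := by rw [hN]; module
    rw [hN'] at this
    rw [this, norm_smul, hOC]
    simp; ring
end

section
/- Nine-point circle (Euler points): in any triangle ABC with orthocenter H, the midpoints of the sides, the feet of the altitudes, and the midpoints of AH, BH, CH all lie on a common circle whose center is the midpoint of the segment joining H and the circumcenter, and whose radius is half the circumradius. -/
open RealInnerProductSpace

lemma midpoint_smul_half {V : Type*} [AddCommGroup V] [Module ℝ V] (x y : V) :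
    midpoint ℝ x y = ((1:ℝ)/2) • (x + y) := by
  rw [midpoint_eq_smul_add, invOf_eq_inv, one_div]

/-- Thales-style lemma: if D sees P, Q at a right angle, its distance to the midpoint
of P Q is half of dist P Q. -/
lemma thales_half {V : Type*} [NormedAddCommGroup V] [InnerProductSpace ℝ V]
    (D P Q : V) (h : ⟪D - P, D - Q⟫ = 0) :
    dist D (midpoint ℝ P Q) = dist P Q / 2 := by
  have h1 : D - midpoint ℝ P Q = ((1:ℝ)/2) • ((D - P) + (D - Q)) := by
    rw [midpoint_smul_half]; module
  have h2 : ‖(D - P) + (D - Q)‖ = ‖(D - P) - (D - Q)‖ := by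
    have ha := norm_add_sq_real (D - P) (D - Q)
    have hb := norm_sub_sq_real (D - P) (D - Q)
    rw [← Real.sqrt_sq (norm_nonneg ((D - P) + (D - Q))),
      ← Real.sqrt_sq (norm_nonneg ((D - P) - (D - Q))), ha, hb, h]
    norm_num
  have h3 : (D - P) - (D - Q) = -(P - Q) := by abel
  rw [dist_eq_norm, dist_eq_norm, h1, norm_smul, h2, h3, norm_neg]
  simp; ring

theorem nine_point_circle (A B C D E F O H : EuclideanSpace ℝ (Fin 2)) (R : ℝ)
    (hABC : AffineIndependent ℝ ![A, B, C])
    (hO : dist O A = R ∧ dist O B = R ∧ dist O C = R)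
    (hH : H = A + B + C - (2 : ℝ) • O)
    (hD : D ∈ affineSpan ℝ ({B, C} : Set (EuclideanSpace ℝ (Fin 2))) ∧ ⟪A - D, C - B⟫ = 0)
    (hE : E ∈ affineSpan ℝ ({C, A} : Set (EuclideanSpace ℝ (Fin 2))) ∧ ⟪B - E, A - C⟫ = 0)
    (hF : F ∈ affineSpan ℝ ({A, B} : Set (EuclideanSpace ℝ (Fin 2))) ∧ ⟪C - F, B - A⟫ = 0) :
    let N := midpoint ℝ O H
    dist (midpoint ℝ B C) N = R / 2 ∧ dist (midpoint ℝ C A) N = R / 2 ∧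
    dist (midpoint ℝ A B) N = R / 2 ∧
    dist D N = R / 2 ∧ dist E N = R / 2 ∧ dist F N = R / 2 ∧
    dist (midpoint ℝ A H) N = R / 2 ∧ dist (midpoint ℝ B H) N = R / 2 ∧
    dist (midpoint ℝ C H) N = R / 2 := by
  intro N
  obtain ⟨hOA, hOB, hOC⟩ := hO
  have hNdef : N = midpoint ℝ O H := rfl
  -- handy distance computation for easy points
  have key : ∀ X Y : EuclideanSpace ℝ (Fin 2),
      X - N = ((1:ℝ)/2) • (O - Y) → dist O Y = R → dist X N = R / 2 := by
    intro X Y hXY hOY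
    rw [dist_eq_norm, hXY, norm_smul]
    rw [dist_eq_norm] at hOY
    rw [hOY]; simp; ring
  have key' : ∀ X Y : EuclideanSpace ℝ (Fin 2),
      X - N = ((1:ℝ)/2) • (Y - O) → dist O Y = R → dist X N = R / 2 := by
    intro X Y hXY hOY
    rw [dist_eq_norm] at hOY
    rw [dist_eq_norm, hXY, norm_smul, show Y - O = -(O - Y) by abel, norm_neg, hOY]
    simp; ring
  -- the six "midpoint" points
  have m1 : dist (midpoint ℝ B C) N = R / 2 := by
    refine key _ A ?_ hOA
    rw [hNdef, hH, midpoint_smul_half, midpoint_smul_half]; module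
  have m2 : dist (midpoint ℝ C A) N = R / 2 := by
    refine key _ B ?_ hOB
    rw [hNdef, hH, midpoint_smul_half, midpoint_smul_half]; module
  have m3 : dist (midpoint ℝ A B) N = R / 2 := by
    refine key _ C ?_ hOC
    rw [hNdef, hH, midpoint_smul_half, midpoint_smul_half]; module
  have m4 : dist (midpoint ℝ A H) N = R / 2 := by
    refine key' _ A ?_ hOA
    rw [hNdef, hH, midpoint_smul_half, midpoint_smul_half]; module
  have m5 : dist (midpoint ℝ B H) N = R / 2 := by
    refine key' _ B ?_ hOB
    rw [hNdef, hH, midpoint_smul_half, midpoint_smul_half]; module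
  have m6 : dist (midpoint ℝ C H) N = R / 2 := by
    refine key' _ C ?_ hOC
    rw [hNdef, hH, midpoint_smul_half, midpoint_smul_half]; module
  -- squared-norm facts from the circumcircle conditions
  have nOA : ⟪A - O, A - O⟫ = R ^ 2 := by
    rw [real_inner_self_eq_norm_sq, ← dist_eq_norm, dist_comm, hOA]
  have nOB : ⟪B - O, B - O⟫ = R ^ 2 := by
    rw [real_inner_self_eq_norm_sq, ← dist_eq_norm, dist_comm, hOB]
  have nOC : ⟪C - O, C - O⟫ = R ^ 2 := by
    rw [real_inner_self_eq_norm_sq, ← dist_eq_norm, dist_comm, hOC]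
  -- generic treatment of a foot of an altitude
  have foot : ∀ (X Y Z W Hp : EuclideanSpace ℝ (Fin 2)),
      W ∈ affineSpan ℝ ({Y, Z} : Set (EuclideanSpace ℝ (Fin 2))) →
      ⟪X - W, Z - Y⟫ = 0 →
      ⟪Y - O, Y - O⟫ = R ^ 2 → ⟪Z - O, Z - O⟫ = R ^ 2 → dist O X = R →
      Hp = X + Y + Z - (2:ℝ) • O →
      dist W (midpoint ℝ O Hp) = R / 2 := by
    intro X Y Z W Hp hmem hperp nY nZ nX hHp
    obtain ⟨t, ht⟩ : ∃ t : ℝ, t • (Z - Y) = W - Y := by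
      have h1 : W -ᵥ Y ∈ vectorSpan ℝ ({Y, Z} : Set (EuclideanSpace ℝ (Fin 2))) := by
        have := AffineSubspace.vsub_mem_direction hmem
          (left_mem_affineSpan_pair ℝ Y Z)
        rwa [direction_affineSpan] at this
      rwa [mem_vectorSpan_pair_rev] at h1
    have hW : W = Y + t • (Z - Y) := by rw [ht]; abel
    -- the two antipodal points
    set P := midpoint ℝ Y Z with hP
    set Q := X + ((1:ℝ)/2) • (Y + Z) - O with hQ
    have hprod : ⟪W - P, W - Q⟫ = 0 := by
      have e1 : W - P = (t - 1/2) • (Z - Y) := by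
        rw [hW, hP, midpoint_smul_half]; module
      have e2 : W - Q = (W - X) - ((1:ℝ)/2) • ((Y - O) + (Z - O)) := by
        rw [hQ]; module
      have i1 : ⟪Z - Y, W - X⟫ = 0 := by
        rw [show W - X = -(X - W) by abel, inner_neg_right, real_inner_comm, hperp, neg_zero]
      have i2 : ⟪Z - Y, (Y - O) + (Z - O)⟫ = 0 := by
        rw [show Z - Y = (Z - O) - (Y - O) by abel, inner_sub_left, inner_add_right,
          inner_add_right, real_inner_comm (Y - O) (Z - O)]
        linarith [nY, nZ]
      rw [e1, e2, real_inner_smul_left, inner_sub_right, i1, real_inner_smul_right, i2]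
      ring
    have hth := thales_half W P Q hprod
    have hNQ : midpoint ℝ P Q = midpoint ℝ O Hp := by
      rw [hP, hHp, midpoint_smul_half, midpoint_smul_half, midpoint_smul_half, hQ]
      module
    have hPQ : dist P Q = R := by
      have : P - Q = O - X := by
        rw [hP, hQ, midpoint_smul_half]; module
      rw [dist_eq_norm, this, ← dist_eq_norm, nX]
    rw [hNQ, hPQ] at hth
    exact hth
  have f1 : dist D N = R / 2 := by
    refine foot A B C D H hD.1 hD.2 nOB nOC hOA ?_
    rw [hH]
  have f2 : dist E N = R / 2 := by
    refine foot B C A E H hE.1 hE.2 nOC nOA hOB ?_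
    rw [hH]; abel
  have f3 : dist F N = R / 2 := by
    refine foot C A B F H hF.1 hF.2 nOA nOB hOC ?_
    rw [hH]; abel
  exact ⟨m1, m2, m3, f1, f2, f3, m4, m5, m6⟩
end

section
/- Pappus's hexagon theorem: if A, B, E are collinear, C, D, F are collinear, and G = AD ∩ BC, H = AF ∩ CE, I = BF ∩ DE (assuming these intersection points exist and the relevant lines are distinct), then G, H, I are collinear. -/
set_option maxHeartbeats 1000000 in
private lemma pappus_key (v0 v1 u0 u1 be ep de ph c0 c1
    b0 b1 e0 e1 d0 d1 f0 f1 s t k P Q R : ℝ)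
    (hb0 : b0 = be*v0) (hb1 : b1 = be*v1)
    (he0 : e0 = ep*v0) (he1 : e1 = ep*v1)
    (hd0 : d0 = c0 + de*u0) (hd1 : d1 = c1 + de*u1)
    (hf0 : f0 = c0 + ph*u0) (hf1 : f1 = c1 + ph*u1)
    (hPd : P = d0*(c1-b1) - d1*(c0-b0)) (hP : P ≠ 0)
    (hQd : Q = f0*(e1-c1) - f1*(e0-c0)) (hQ : Q ≠ 0)
    (hRd : R = (e0-d0)*(f1-b1) - (e1-d1)*(f0-b0)) (hR : R ≠ 0)
    (hs : s * P = b0*(c1-b1) - b1*(c0-b0))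
    (ht : t * Q = c0*(e1-c1) - c1*(e0-c0))
    (hk : k * R = (b0-d0)*(f1-b1) - (b1-d1)*(f0-b0)) :
    (t*f0 - s*d0) * (d1 + k*(e1-d1) - s*d1) - (t*f1 - s*d1) * (d0 + k*(e0-d0) - s*d0) = 0 := by
  have hs' := (eq_div_iff hP).mpr hs
  have ht' := (eq_div_iff hQ).mpr ht
  have hk' := (eq_div_iff hR).mpr hk
  subst hs' ht' hk'
  field_simp
  subst hb0 hb1 he0 he1 hd0 hd1 hf0 hf1 hPd hQd hRd
  ring

private lemma vec_comp_ne (x : EuclideanSpace ℝ (Fin 2)) (hx : x ≠ 0) :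
    x 0 ≠ 0 ∨ x 1 ≠ 0 := by
  by_contra hcon
  push_neg at hcon
  exact hx (PiLp.ext fun i => by fin_cases i <;> simp [hcon.1, hcon.2])

private lemma collinear_of_cross (G H I : EuclideanSpace ℝ (Fin 2))
    (hc : (H 0 - G 0) * (I 1 - G 1) - (H 1 - G 1) * (I 0 - G 0) = 0) :
    Collinear ℝ ({G, H, I} : Set (EuclideanSpace ℝ (Fin 2))) := by
  rw [collinear_iff_of_mem (Set.mem_insert G {H, I})]
  by_cases h0 : H 0 - G 0 = 0
  · by_cases h1 : H 1 - G 1 = 0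
    · refine ⟨I - G, ?_⟩
      intro p hp
      rcases hp with h | h | h <;> rw [h]
      · exact ⟨0, by simp⟩
      · refine ⟨0, ?_⟩
        simp only [zero_smul, zero_vadd]
        refine PiLp.ext fun i => ?_; fin_cases i
        · show H 0 = G 0; linarith
        · show H 1 = G 1; linarith
      · exact ⟨1, by simp [vadd_eq_add, sub_add_cancel]⟩
    · refine ⟨H - G, ?_⟩
      intro p hp
      rcases hp with h | h | h <;> rw [h]
      · exact ⟨0, by simp⟩
      · exact ⟨1, by simp [vadd_eq_add, sub_add_cancel]⟩
      · refine ⟨(I 1 - G 1) / (H 1 - G 1), ?_⟩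
        have hv : ∀ i, (((I 1 - G 1) / (H 1 - G 1)) • (H - G) +ᵥ G) i
            = (I 1 - G 1) / (H 1 - G 1) * (H i - G i) + G i := by
          intro i; simp [vadd_eq_add]
        refine PiLp.ext fun i => ?_
        rw [hv i]; fin_cases i
        · show I 0 = (I 1 - G 1) / (H 1 - G 1) * (H 0 - G 0) + G 0
          rw [div_mul_eq_mul_div, div_add' _ _ _ h1, eq_div_iff h1]
          linear_combination -hc
        · show I 1 = (I 1 - G 1) / (H 1 - G 1) * (H 1 - G 1) + G 1
          rw [div_mul_eq_mul_div, div_add' _ _ _ h1, eq_div_iff h1]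
          ring
  · refine ⟨H - G, ?_⟩
    intro p hp
    rcases hp with h | h | h <;> rw [h]
    · exact ⟨0, by simp⟩
    · exact ⟨1, by simp [vadd_eq_add, sub_add_cancel]⟩
    · refine ⟨(I 0 - G 0) / (H 0 - G 0), ?_⟩
      have hv : ∀ i, (((I 0 - G 0) / (H 0 - G 0)) • (H - G) +ᵥ G) i
          = (I 0 - G 0) / (H 0 - G 0) * (H i - G i) + G i := by
        intro i; simp [vadd_eq_add]
      refine PiLp.ext fun i => ?_
      rw [hv i]; fin_cases i
      · show I 0 = (I 0 - G 0) / (H 0 - G 0) * (H 0 - G 0) + G 0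
        rw [div_mul_eq_mul_div, div_add' _ _ _ h0, eq_div_iff h0]
        ring
      · show I 1 = (I 0 - G 0) / (H 0 - G 0) * (H 1 - G 1) + G 1
        rw [div_mul_eq_mul_div, div_add' _ _ _ h0, eq_div_iff h0]
        linear_combination hc

private lemma cross_ne_of_span_ne (A D B C G : EuclideanSpace ℝ (Fin 2))
    (hAD : A ≠ D) (hBC : B ≠ C)
    (hne : affineSpan ℝ ({A, D} : Set (EuclideanSpace ℝ (Fin 2))) ≠ affineSpan ℝ {B, C})
    (h1 : G ∈ affineSpan ℝ ({A, D} : Set (EuclideanSpace ℝ (Fin 2))))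
    (h2 : G ∈ affineSpan ℝ ({B, C} : Set (EuclideanSpace ℝ (Fin 2)))) :
    (D 0 - A 0) * (C 1 - B 1) - (D 1 - A 1) * (C 0 - B 0) ≠ 0 := by
  intro h0
  apply hne
  apply AffineSubspace.ext_of_direction_eq
  · rw [direction_affineSpan, direction_affineSpan, vectorSpan_pair, vectorSpan_pair,
      vsub_eq_sub, vsub_eq_sub]
    have hu : (A - D : EuclideanSpace ℝ (Fin 2)) ≠ 0 := sub_ne_zero.mpr hAD
    have hw : (B - C : EuclideanSpace ℝ (Fin 2)) ≠ 0 := sub_ne_zero.mpr hBC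
    obtain ⟨c, hc⟩ : ∃ c : ℝ, (B - C : EuclideanSpace ℝ (Fin 2)) = c • (A - D) := by
      rcases vec_comp_ne (A - D) hu with h | h
      · refine ⟨(B 0 - C 0) / (A 0 - D 0), PiLp.ext fun i => ?_⟩
        have hsub0 : (A - D : EuclideanSpace ℝ (Fin 2)) 0 = A 0 - D 0 := by simp
        rw [hsub0] at h
        fin_cases i
        · show B 0 - C 0 = (B 0 - C 0) / (A 0 - D 0) * (A 0 - D 0)
          field_simp
        · show B 1 - C 1 = (B 0 - C 0) / (A 0 - D 0) * (A 1 - D 1)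
          rw [div_mul_eq_mul_div, eq_div_iff h]
          linear_combination h0
      · refine ⟨(B 1 - C 1) / (A 1 - D 1), PiLp.ext fun i => ?_⟩
        have hsub1 : (A - D : EuclideanSpace ℝ (Fin 2)) 1 = A 1 - D 1 := by simp
        rw [hsub1] at h
        fin_cases i
        · show B 0 - C 0 = (B 1 - C 1) / (A 1 - D 1) * (A 0 - D 0)
          rw [div_mul_eq_mul_div, eq_div_iff h]
          linear_combination -h0
        · show B 1 - C 1 = (B 1 - C 1) / (A 1 - D 1) * (A 1 - D 1)
          field_simp
    have hc0 : c ≠ 0 := by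
      rintro rfl
      rw [zero_smul] at hc
      exact hw hc
    rw [hc, Submodule.span_singleton_smul_eq (isUnit_iff_ne_zero.mpr hc0)]
  · exact ⟨G, h1, h2⟩

private lemma mem_pair_param (X P₁ P₂ : EuclideanSpace ℝ (Fin 2))
    (h : X ∈ affineSpan ℝ ({P₁, P₂} : Set (EuclideanSpace ℝ (Fin 2)))) :
    ∃ r : ℝ, X = r • (P₂ - P₁) + P₁ := by
  have h' : (X - P₁) +ᵥ P₁ ∈ affineSpan ℝ ({P₁, P₂} : Set (EuclideanSpace ℝ (Fin 2))) := by
    simpa [vadd_eq_add, sub_add_cancel] using h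
  obtain ⟨r, hr⟩ := (vadd_left_mem_affineSpan_pair).mp h'
  rw [vsub_eq_sub] at hr
  exact ⟨r, by rw [← sub_eq_iff_eq_add]; exact hr.symm⟩

private lemma comp_param {X Y Z W : EuclideanSpace ℝ (Fin 2)} {r : ℝ}
    (h : X = r • (Y - Z) + W) (i : Fin 2) : X i = r * (Y i - Z i) + W i := by
  rw [h]; simp

private lemma comp_vadd {X V W : EuclideanSpace ℝ (Fin 2)} {r : ℝ}
    (h : X = r • V +ᵥ W) (i : Fin 2) : X i = r * V i + W i := by
  rw [h]; simp [vadd_eq_add]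

theorem pappus_hexagon (A B C D E F G H I : EuclideanSpace ℝ (Fin 2))
    (hABE : Collinear ℝ {A, B, E}) (hCDF : Collinear ℝ {C, D, F})
    (hAD : A ≠ D) (hBC : B ≠ C) (hAF : A ≠ F) (hCE : C ≠ E) (hBF : B ≠ F) (hDE : D ≠ E)
    (hG1 : affineSpan ℝ ({A, D} : Set (EuclideanSpace ℝ (Fin 2))) ≠ affineSpan ℝ {B, C})
    (hG2 : affineSpan ℝ ({A, F} : Set (EuclideanSpace ℝ (Fin 2))) ≠ affineSpan ℝ {C, E})
    (hG3 : affineSpan ℝ ({B, F} : Set (EuclideanSpace ℝ (Fin 2))) ≠ affineSpan ℝ {D, E})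
    (hG : G ∈ affineSpan ℝ ({A, D} : Set (EuclideanSpace ℝ (Fin 2))) ∧
          G ∈ affineSpan ℝ ({B, C} : Set (EuclideanSpace ℝ (Fin 2))))
    (hH : H ∈ affineSpan ℝ ({A, F} : Set (EuclideanSpace ℝ (Fin 2))) ∧
          H ∈ affineSpan ℝ ({C, E} : Set (EuclideanSpace ℝ (Fin 2))))
    (hI : I ∈ affineSpan ℝ ({B, F} : Set (EuclideanSpace ℝ (Fin 2))) ∧
          I ∈ affineSpan ℝ ({D, E} : Set (EuclideanSpace ℝ (Fin 2)))) :
    Collinear ℝ {G, H, I} := by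
  -- parameters for the intersection points
  obtain ⟨s, hGs⟩ := mem_pair_param G A D hG.1
  obtain ⟨s', hGs'⟩ := mem_pair_param G B C hG.2
  obtain ⟨t, hHt⟩ := mem_pair_param H A F hH.1
  obtain ⟨t', hHt'⟩ := mem_pair_param H C E hH.2
  obtain ⟨j, hIj⟩ := mem_pair_param I B F hI.1
  obtain ⟨k, hIk⟩ := mem_pair_param I D E hI.2
  -- parametrize the two base lines
  obtain ⟨v, hv⟩ := (collinear_iff_of_mem (Set.mem_insert A {B, E})).mp hABE
  obtain ⟨be, hBv⟩ := hv B (by simp)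
  obtain ⟨ep, hEv⟩ := hv E (by simp)
  obtain ⟨u, hu⟩ := (collinear_iff_of_mem (Set.mem_insert C {D, F})).mp hCDF
  obtain ⟨de, hDu⟩ := hu D (by simp)
  obtain ⟨ph, hFu⟩ := hu F (by simp)
  -- the relevant cross products are nonzero
  have hP := cross_ne_of_span_ne A D B C G hAD hBC hG1 hG.1 hG.2
  have hQ := cross_ne_of_span_ne A F C E H hAF hCE hG2 hH.1 hH.2
  have hR' := cross_ne_of_span_ne B F D E I hBF hDE hG3 hI.1 hI.2
  have hR : (E 0 - D 0) * (F 1 - B 1) - (E 1 - D 1) * (F 0 - B 0) ≠ 0 := by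
    intro h; apply hR'; linear_combination -h
  -- component equations
  have hGs0 := comp_param hGs 0; have hGs1 := comp_param hGs 1
  have hGs'0 := comp_param hGs' 0; have hGs'1 := comp_param hGs' 1
  have hHt0 := comp_param hHt 0; have hHt1 := comp_param hHt 1
  have hHt'0 := comp_param hHt' 0; have hHt'1 := comp_param hHt' 1
  have hIj0 := comp_param hIj 0; have hIj1 := comp_param hIj 1
  have hIk0 := comp_param hIk 0; have hIk1 := comp_param hIk 1
  have hBv0 := comp_vadd hBv 0; have hBv1 := comp_vadd hBv 1
  have hEv0 := comp_vadd hEv 0; have hEv1 := comp_vadd hEv 1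
  have hDu0 := comp_vadd hDu 0; have hDu1 := comp_vadd hDu 1
  have hFu0 := comp_vadd hFu 0; have hFu1 := comp_vadd hFu 1
  -- apply the key algebraic identity, in coordinates relative to A
  have key := pappus_key (v 0) (v 1) (u 0) (u 1) be ep de ph
      (C 0 - A 0) (C 1 - A 1)
      (B 0 - A 0) (B 1 - A 1) (E 0 - A 0) (E 1 - A 1)
      (D 0 - A 0) (D 1 - A 1) (F 0 - A 0) (F 1 - A 1)
      s t k
      ((D 0 - A 0) * (C 1 - B 1) - (D 1 - A 1) * (C 0 - B 0))
      ((F 0 - A 0) * (E 1 - C 1) - (F 1 - A 1) * (E 0 - C 0))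
      ((E 0 - D 0) * (F 1 - B 1) - (E 1 - D 1) * (F 0 - B 0))
      (by linear_combination hBv0) (by linear_combination hBv1)
      (by linear_combination hEv0) (by linear_combination hEv1)
      (by linear_combination hDu0) (by linear_combination hDu1)
      (by linear_combination hFu0) (by linear_combination hFu1)
      (by ring) hP (by ring) hQ (by ring) hR
      (by linear_combination (C 1 - B 1) * (hGs0.symm.trans hGs'0) -
            (C 0 - B 0) * (hGs1.symm.trans hGs'1))
      (by linear_combination (E 1 - C 1) * (hHt0.symm.trans hHt'0) -
            (E 0 - C 0) * (hHt1.symm.trans hHt'1))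
      (by linear_combination (F 1 - B 1) * (hIk0.symm.trans hIj0) -
            (F 0 - B 0) * (hIk1.symm.trans hIj1))
  apply collinear_of_cross
  rw [hHt0, hHt1, hGs0, hGs1, hIk0, hIk1]
  linear_combination key
end

section
/- IMO 2010 shortlist G1: Let ABC be an acute triangle with D, E, F the feet of the altitudes on BC, CA, AB respectively. Let P be an intersection point of line EF with the circumcircle of ABC, and let Q be the intersection of lines BP and DF. Then AP = AQ. -/
open RealInnerProductSpace EuclideanGeometry

set_option maxHeartbeats 2000000

private lemma dist_sq2 (X Y : EuclideanSpace ℝ (Fin 2)) :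
    dist X Y ^ 2 = (X 0 - Y 0) ^ 2 + (X 1 - Y 1) ^ 2 := by
  rw [EuclideanSpace.dist_eq, Real.sq_sqrt (by positivity)]
  simp [Fin.sum_univ_two, Real.dist_eq, sq_abs]

private lemma inner2' (X Y Z W : EuclideanSpace ℝ (Fin 2)) :
    ⟪X - Y, Z - W⟫ = (X 0 - Y 0) * (Z 0 - W 0) + (X 1 - Y 1) * (Z 1 - W 1) := by
  simp [PiLp.inner_apply, RCLike.inner_apply, Fin.sum_univ_two, PiLp.sub_apply,
    starRingEnd_apply, star_trivial]
  ring

private lemma pt_ext {X Y : EuclideanSpace ℝ (Fin 2)} (h0 : X 0 = Y 0) (h1 : X 1 = Y 1) :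
    X = Y := by
  refine PiLp.ext fun i => ?_
  fin_cases i <;> assumption

private lemma coord_smul_vadd (r : ℝ) (v p : EuclideanSpace ℝ (Fin 2)) (i : Fin 2) :
    (r • v +ᵥ p) i = r * v i + p i := by
  simp [vadd_eq_add, PiLp.add_apply, PiLp.smul_apply, smul_eq_mul]

private lemma collinear_param {X Y Z : EuclideanSpace ℝ (Fin 2)}
    (h : Collinear ℝ ({X, Y, Z} : Set (EuclideanSpace ℝ (Fin 2)))) (hYZ : Y ≠ Z) :
    ∃ t : ℝ, ∀ i : Fin 2, X i - Y i = t * (Z i - Y i) := by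
  obtain ⟨p₀, v, hf⟩ := (collinear_iff_exists_forall_eq_smul_vadd _).1 h
  obtain ⟨rX, hX⟩ := hf X (by simp)
  obtain ⟨rY, hY⟩ := hf Y (by simp)
  obtain ⟨rZ, hZ⟩ := hf Z (by simp)
  have hne : rZ - rY ≠ 0 := by
    intro h0
    apply hYZ
    rw [hY, hZ, show rY = rZ by linarith [sub_eq_zero.mp h0]]
  refine ⟨(rX - rY) / (rZ - rY), fun i => ?_⟩
  have hXi := congrArg (fun W : EuclideanSpace ℝ (Fin 2) => W i) hX
  have hYi := congrArg (fun W : EuclideanSpace ℝ (Fin 2) => W i) hY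
  have hZi := congrArg (fun W : EuclideanSpace ℝ (Fin 2) => W i) hZ
  simp only [coord_smul_vadd] at hXi hYi hZi
  rw [hXi, hYi, hZi]
  field_simp
  ring

private lemma collinear_cross {X Y Z : EuclideanSpace ℝ (Fin 2)}
    (h : Collinear ℝ ({X, Y, Z} : Set (EuclideanSpace ℝ (Fin 2)))) :
    (Y 0 - X 0) * (Z 1 - X 1) - (Y 1 - X 1) * (Z 0 - X 0) = 0 := by
  obtain ⟨p₀, v, hf⟩ := (collinear_iff_exists_forall_eq_smul_vadd _).1 h
  obtain ⟨rX, hX⟩ := hf X (by simp)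
  obtain ⟨rY, hY⟩ := hf Y (by simp)
  obtain ⟨rZ, hZ⟩ := hf Z (by simp)
  have h00 := congrArg (fun W : EuclideanSpace ℝ (Fin 2) => W 0) hX
  have h01 := congrArg (fun W : EuclideanSpace ℝ (Fin 2) => W 1) hX
  have h10 := congrArg (fun W : EuclideanSpace ℝ (Fin 2) => W 0) hY
  have h11 := congrArg (fun W : EuclideanSpace ℝ (Fin 2) => W 1) hY
  have h20 := congrArg (fun W : EuclideanSpace ℝ (Fin 2) => W 0) hZ
  have h21 := congrArg (fun W : EuclideanSpace ℝ (Fin 2) => W 1) hZ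
  simp only [coord_smul_vadd] at h00 h01 h10 h11 h20 h21
  rw [h00, h01, h10, h11, h20, h21]
  ring


private lemma aq_calc (b1 b2 c1 c2 p1 p2 d0 d1 f0 f1 q0 q1 tD tF s : ℝ)
    (hR : b1 ^ 2 + b2 ^ 2 - (b1 * c1 + b2 * c2) ≠ 0)
    (hdel : (c1 - b1) ^ 2 + (c2 - b2) ^ 2 ≠ 0)
    (hchi : b1 * c2 - b2 * c1 ≠ 0)
    (htDd : tD * ((c1 - b1) ^ 2 + (c2 - b2) ^ 2)
      = b1 ^ 2 + b2 ^ 2 - (b1 * c1 + b2 * c2))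
    (htD0 : d0 - b1 = tD * (c1 - b1))
    (htD1 : d1 - b2 = tD * (c2 - b2))
    (htF0 : f0 = tF * b1)
    (htF1 : f1 = tF * b2)
    (htFb : tF * (b1 ^ 2 + b2 ^ 2) = b1 * c1 + b2 * c2)
    (hs0 : q0 - b1 = s * (p1 - b1))
    (hs1 : q1 - b2 = s * (p2 - b2))
    (hcross : (f0 - d0) * (q1 - d1) - (f1 - d1) * (q0 - d0) = 0)
    (hppk : p1 ^ 2 + p2 ^ 2 = b1 * c1 + b2 * c2)
    (hH2X : (p1 * c2 - p2 * c1) * (b1 ^ 2 + b2 ^ 2) + (b1 * p2 - b2 * p1) * (c1 ^ 2 + c2 ^ 2)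
      = (b1 * c1 + b2 * c2) * (b1 * c2 - b2 * c1)) :
    q0 ^ 2 + q1 ^ 2 = b1 * c1 + b2 * c2 := by
  have hqd0 : ((c1 - b1) ^ 2 + (c2 - b2) ^ 2) * (q0 - d0)
      = ((c1 - b1) ^ 2 + (c2 - b2) ^ 2) * s * (p1 - b1)
        - (b1 ^ 2 + b2 ^ 2 - (b1 * c1 + b2 * c2)) * (c1 - b1) := by
    linear_combination ((c1 - b1) ^ 2 + (c2 - b2) ^ 2) * hs0
      - ((c1 - b1) ^ 2 + (c2 - b2) ^ 2) * htD0 - (c1 - b1) * htDd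
  have hqd1 : ((c1 - b1) ^ 2 + (c2 - b2) ^ 2) * (q1 - d1)
      = ((c1 - b1) ^ 2 + (c2 - b2) ^ 2) * s * (p2 - b2)
        - (b1 ^ 2 + b2 ^ 2 - (b1 * c1 + b2 * c2)) * (c2 - b2) := by
    linear_combination ((c1 - b1) ^ 2 + (c2 - b2) ^ 2) * hs1
      - ((c1 - b1) ^ 2 + (c2 - b2) ^ 2) * htD1 - (c2 - b2) * htDd
  have hfd0 : ((c1 - b1) ^ 2 + (c2 - b2) ^ 2) * (b1 ^ 2 + b2 ^ 2) * (f0 - d0)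
      = -((b1 ^ 2 + b2 ^ 2 - (b1 * c1 + b2 * c2))
          * (((c1 - b1) ^ 2 + (c2 - b2) ^ 2) * b1 + (b1 ^ 2 + b2 ^ 2) * (c1 - b1))) := by
    linear_combination ((c1 - b1) ^ 2 + (c2 - b2) ^ 2) * (b1 ^ 2 + b2 ^ 2) * htF0
      + ((c1 - b1) ^ 2 + (c2 - b2) ^ 2) * b1 * htFb
      - (b1 ^ 2 + b2 ^ 2) * (((c1 - b1) ^ 2 + (c2 - b2) ^ 2) * htD0 + (c1 - b1) * htDd)
  have hfd1 : ((c1 - b1) ^ 2 + (c2 - b2) ^ 2) * (b1 ^ 2 + b2 ^ 2) * (f1 - d1)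
      = -((b1 ^ 2 + b2 ^ 2 - (b1 * c1 + b2 * c2))
          * (((c1 - b1) ^ 2 + (c2 - b2) ^ 2) * b2 + (b1 ^ 2 + b2 ^ 2) * (c2 - b2))) := by
    linear_combination ((c1 - b1) ^ 2 + (c2 - b2) ^ 2) * (b1 ^ 2 + b2 ^ 2) * htF1
      + ((c1 - b1) ^ 2 + (c2 - b2) ^ 2) * b2 * htFb
      - (b1 ^ 2 + b2 ^ 2) * (((c1 - b1) ^ 2 + (c2 - b2) ^ 2) * htD1 + (c2 - b2) * htDd)
  have hW : (((c1 - b1) ^ 2 + (c2 - b2) ^ 2) * s * (p1 - b1)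
        - (b1 ^ 2 + b2 ^ 2 - (b1 * c1 + b2 * c2)) * (c1 - b1))
      * (-((b1 ^ 2 + b2 ^ 2 - (b1 * c1 + b2 * c2))
          * (((c1 - b1) ^ 2 + (c2 - b2) ^ 2) * b2 + (b1 ^ 2 + b2 ^ 2) * (c2 - b2))))
      - (((c1 - b1) ^ 2 + (c2 - b2) ^ 2) * s * (p2 - b2)
        - (b1 ^ 2 + b2 ^ 2 - (b1 * c1 + b2 * c2)) * (c2 - b2))
      * (-((b1 ^ 2 + b2 ^ 2 - (b1 * c1 + b2 * c2))
          * (((c1 - b1) ^ 2 + (c2 - b2) ^ 2) * b1 + (b1 ^ 2 + b2 ^ 2) * (c1 - b1))))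
      = 0 := by
    linear_combination
      (-(((c1 - b1) ^ 2 + (c2 - b2) ^ 2) ^ 2 * (b1 ^ 2 + b2 ^ 2))) * hcross
      - (((c1 - b1) ^ 2 + (c2 - b2) ^ 2) * s * (p1 - b1)
          - (b1 ^ 2 + b2 ^ 2 - (b1 * c1 + b2 * c2)) * (c1 - b1)) * hfd1
      - (((c1 - b1) ^ 2 + (c2 - b2) ^ 2) * (b1 ^ 2 + b2 ^ 2) * (f1 - d1)) * hqd0
      + (((c1 - b1) ^ 2 + (c2 - b2) ^ 2) * s * (p2 - b2)
          - (b1 ^ 2 + b2 ^ 2 - (b1 * c1 + b2 * c2)) * (c2 - b2)) * hfd0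
      + (((c1 - b1) ^ 2 + (c2 - b2) ^ 2) * (b1 ^ 2 + b2 ^ 2) * (f0 - d0)) * hqd1
  have hqq : (b1 + s * (p1 - b1)) ^ 2 + (b2 + s * (p2 - b2)) ^ 2
      = b1 * c1 + b2 * c2 := by
    have hRdc : (b1 ^ 2 + b2 ^ 2 - (b1 * c1 + b2 * c2))
        * ((c1 - b1) ^ 2 + (c2 - b2) ^ 2) * (b1 * c2 - b2 * c1) ≠ 0 :=
      mul_ne_zero (mul_ne_zero hR hdel) hchi
    apply mul_left_cancel₀ hRdc
    linear_combination
      (s ^ 2 * ((b1 ^ 2 + b2 ^ 2 - (b1 * c1 + b2 * c2))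
        * ((c1 - b1) ^ 2 + (c2 - b2) ^ 2) * (b1 * c2 - b2 * c1))) * hppk
      + ((s - s ^ 2) * ((b1 ^ 2 + b2 ^ 2 - (b1 * c1 + b2 * c2))
        * ((c1 - b1) ^ 2 + (c2 - b2) ^ 2))) * hH2X
      + (s - 1) * hW
  linear_combination hqq + (q0 + (b1 + s * (p1 - b1))) * hs0 + (q1 + (b2 + s * (p2 - b2))) * hs1

theorem imo2010_sl_g1 (A B C D E F O P Q : EuclideanSpace ℝ (Fin 2))
    (hABC : AffineIndependent ℝ ![A, B, C])
    (hacute : ∠ B A C < Real.pi / 2 ∧ ∠ A B C < Real.pi / 2 ∧ ∠ B C A < Real.pi / 2)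
    (hD : D ∈ affineSpan ℝ ({B, C} : Set (EuclideanSpace ℝ (Fin 2))) ∧ ⟪A - D, C - B⟫ = 0)
    (hE : E ∈ affineSpan ℝ ({C, A} : Set (EuclideanSpace ℝ (Fin 2))) ∧ ⟪B - E, A - C⟫ = 0)
    (hF : F ∈ affineSpan ℝ ({A, B} : Set (EuclideanSpace ℝ (Fin 2))) ∧ ⟪C - F, B - A⟫ = 0)
    (hO : dist O A = dist O B ∧ dist O B = dist O C)
    (hP : Collinear ℝ {E, F, P} ∧ dist O P = dist O A)
    (hQ : Collinear ℝ {B, P, Q} ∧ Collinear ℝ {D, F, Q}) :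
    dist A P = dist A Q := by
  obtain ⟨hangA, hangB, -⟩ := hacute
  obtain ⟨hD1, hD2⟩ := hD
  obtain ⟨hE1, hE2⟩ := hE
  obtain ⟨hF1, hF2⟩ := hF
  obtain ⟨hO1, hO2⟩ := hO
  obtain ⟨hP1, hP2⟩ := hP
  obtain ⟨hQ1, hQ2⟩ := hQ
  -- inner products at A and B are nonzero (angles ≠ π/2)
  have hkinner : ⟪B - A, C - A⟫ ≠ 0 := by
    intro h
    have h2 : InnerProductGeometry.angle (B - A) (C - A) = Real.pi / 2 :=
      (InnerProductGeometry.inner_eq_zero_iff_angle_eq_pi_div_two _ _).1 h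
    have h3 : ∠ B A C = InnerProductGeometry.angle (B - A) (C - A) := rfl
    rw [h3, h2] at hangA
    linarith
  have hRinner : ⟪A - B, C - B⟫ ≠ 0 := by
    intro h
    have h2 : InnerProductGeometry.angle (A - B) (C - B) = Real.pi / 2 :=
      (InnerProductGeometry.inner_eq_zero_iff_angle_eq_pi_div_two _ _).1 h
    have h3 : ∠ A B C = InnerProductGeometry.angle (A - B) (C - B) := rfl
    rw [h3, h2] at hangB
    linarith
  have hk : (B 0 - A 0) * (C 0 - A 0) + (B 1 - A 1) * (C 1 - A 1) ≠ 0 := by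
    intro h; apply hkinner; rw [inner2']; linarith
  have hR : ((B 0 - A 0) ^ 2 + (B 1 - A 1) ^ 2)
      - ((B 0 - A 0) * (C 0 - A 0) + (B 1 - A 1) * (C 1 - A 1)) ≠ 0 := by
    intro h; apply hRinner; rw [inner2']; linarith [h]
  -- noncollinearity: the cross product χ is nonzero
  have hncol : ¬ Collinear ℝ ({A, B, C} : Set (EuclideanSpace ℝ (Fin 2))) :=
    affineIndependent_iff_not_collinear_set.1 hABC
  have hchi : (B 0 - A 0) * (C 1 - A 1) - (B 1 - A 1) * (C 0 - A 0) ≠ 0 := by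
    intro h
    apply hncol
    by_cases hba : B = A
    · rw [hba]
      have hset : ({A, A, C} : Set (EuclideanSpace ℝ (Fin 2))) = {A, C} := by simp
      rw [hset]
      exact collinear_pair ℝ A C
    · have hb : (B 0 - A 0) ^ 2 + (B 1 - A 1) ^ 2 ≠ 0 := by
        intro hb0
        apply hba
        apply pt_ext <;> nlinarith [sq_nonneg (B 0 - A 0), sq_nonneg (B 1 - A 1)]
      rw [collinear_iff_exists_forall_eq_smul_vadd]
      refine ⟨A, B - A, fun pt hpt => ?_⟩
      simp only [Set.mem_insert_iff, Set.mem_singleton_iff] at hpt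
      rcases hpt with h' | h' | h'
      · subst h'
        refine ⟨0, pt_ext ?_ ?_⟩ <;>
          (simp only [coord_smul_vadd, PiLp.sub_apply]; ring)
      · subst h'
        refine ⟨1, pt_ext ?_ ?_⟩ <;>
          (simp only [coord_smul_vadd, PiLp.sub_apply]; ring)
      · subst h'
        refine ⟨((B 0 - A 0) * (pt 0 - A 0) + (B 1 - A 1) * (pt 1 - A 1))
          / ((B 0 - A 0) ^ 2 + (B 1 - A 1) ^ 2), pt_ext ?_ ?_⟩
        · simp only [coord_smul_vadd, PiLp.sub_apply]
          field_simp
          linear_combination (-(B 1 - A 1)) * h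
        · simp only [coord_smul_vadd, PiLp.sub_apply]
          field_simp
          linear_combination (B 0 - A 0) * h
  -- nonvanishing quantities
  have hbeta : (B 0 - A 0) ^ 2 + (B 1 - A 1) ^ 2 ≠ 0 := by
    intro h0
    apply hchi
    have h1 : B 0 - A 0 = 0 := by nlinarith [sq_nonneg (B 0 - A 0), sq_nonneg (B 1 - A 1)]
    have h2 : B 1 - A 1 = 0 := by nlinarith [sq_nonneg (B 0 - A 0), sq_nonneg (B 1 - A 1)]
    rw [h1, h2]; ring
  have hgam : (C 0 - A 0) ^ 2 + (C 1 - A 1) ^ 2 ≠ 0 := by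
    intro h0
    apply hchi
    have h1 : C 0 - A 0 = 0 := by nlinarith [sq_nonneg (C 0 - A 0), sq_nonneg (C 1 - A 1)]
    have h2 : C 1 - A 1 = 0 := by nlinarith [sq_nonneg (C 0 - A 0), sq_nonneg (C 1 - A 1)]
    rw [h1, h2]; ring
  have hdelta : ((C 0 - A 0) - (B 0 - A 0)) ^ 2 + ((C 1 - A 1) - (B 1 - A 1)) ^ 2 ≠ 0 := by
    intro h0
    apply hchi
    have h1 : C 0 - A 0 - (B 0 - A 0) = 0 := by
      nlinarith [sq_nonneg (C 0 - A 0 - (B 0 - A 0)), sq_nonneg (C 1 - A 1 - (B 1 - A 1))]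
    have h2 : C 1 - A 1 - (B 1 - A 1) = 0 := by
      nlinarith [sq_nonneg (C 0 - A 0 - (B 0 - A 0)), sq_nonneg (C 1 - A 1 - (B 1 - A 1))]
    linear_combination (B 0 - A 0) * h2 - (B 1 - A 1) * h1
  -- point inequalities
  have hBC : B ≠ C := by
    intro h
    apply hdelta
    rw [h]; ring
  have hAC : A ≠ C := by
    intro h
    apply hgam
    rw [← h]; ring
  have hAB : A ≠ B := by
    intro h
    apply hbeta
    rw [← h]; ring
  -- parametrize D on line BC
  have hDcol : Collinear ℝ ({D, B, C} : Set (EuclideanSpace ℝ (Fin 2))) :=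
    (collinear_insert_iff_of_mem_affineSpan hD1).2 (collinear_pair ℝ B C)
  obtain ⟨tD, htD⟩ := collinear_param hDcol hBC
  -- parametrize E on line AC  (E - A = τ (C - A))
  have hEcol : Collinear ℝ ({E, A, C} : Set (EuclideanSpace ℝ (Fin 2))) := by
    rw [Set.pair_comm C A] at hE1
    exact (collinear_insert_iff_of_mem_affineSpan hE1).2 (collinear_pair ℝ A C)
  obtain ⟨tau, htau⟩ := collinear_param hEcol hAC
  -- parametrize F on line AB
  have hFcol : Collinear ℝ ({F, A, B} : Set (EuclideanSpace ℝ (Fin 2))) :=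
    (collinear_insert_iff_of_mem_affineSpan hF1).2 (collinear_pair ℝ A B)
  obtain ⟨tF, htF⟩ := collinear_param hFcol hAB
  -- scalar versions of inner-product hypotheses
  have hD2' : (A 0 - D 0) * (C 0 - B 0) + (A 1 - D 1) * (C 1 - B 1) = 0 := by
    rw [inner2'] at hD2; linarith [hD2]
  have hE2' : (B 0 - E 0) * (A 0 - C 0) + (B 1 - E 1) * (A 1 - C 1) = 0 := by
    rw [inner2'] at hE2; linarith [hE2]
  have hF2' : (C 0 - F 0) * (B 0 - A 0) + (C 1 - F 1) * (B 1 - A 1) = 0 := by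
    rw [inner2'] at hF2; linarith [hF2]
  -- parameter relations
  have htDd : tD * (((C 0 - A 0) - (B 0 - A 0)) ^ 2 + ((C 1 - A 1) - (B 1 - A 1)) ^ 2)
      = ((B 0 - A 0) ^ 2 + (B 1 - A 1) ^ 2)
        - ((B 0 - A 0) * (C 0 - A 0) + (B 1 - A 1) * (C 1 - A 1)) := by
    linear_combination (-1 : ℝ) * hD2' - (C 0 - B 0) * htD 0 - (C 1 - B 1) * htD 1
  have htaug : tau * ((C 0 - A 0) ^ 2 + (C 1 - A 1) ^ 2)
      = (B 0 - A 0) * (C 0 - A 0) + (B 1 - A 1) * (C 1 - A 1) := by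
    linear_combination hE2' - (C 0 - A 0) * htau 0 - (C 1 - A 1) * htau 1
  have htFb : tF * ((B 0 - A 0) ^ 2 + (B 1 - A 1) ^ 2)
      = (B 0 - A 0) * (C 0 - A 0) + (B 1 - A 1) * (C 1 - A 1) := by
    linear_combination (-1 : ℝ) * hF2' - (B 0 - A 0) * htF 0 - (B 1 - A 1) * htF 1
  -- circumcenter equations
  have hOAB : (O 0 - A 0) ^ 2 + (O 1 - A 1) ^ 2 = (O 0 - B 0) ^ 2 + (O 1 - B 1) ^ 2 := by
    have h := congrArg (fun x : ℝ => x ^ 2) hO1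
    simpa [dist_sq2] using h
  have hOBC : (O 0 - B 0) ^ 2 + (O 1 - B 1) ^ 2 = (O 0 - C 0) ^ 2 + (O 1 - C 1) ^ 2 := by
    have h := congrArg (fun x : ℝ => x ^ 2) hO2
    simpa [dist_sq2] using h
  have ho_b : 2 * ((O 0 - A 0) * (B 0 - A 0) + (O 1 - A 1) * (B 1 - A 1))
      = (B 0 - A 0) ^ 2 + (B 1 - A 1) ^ 2 := by
    linear_combination hOAB
  have ho_c : 2 * ((O 0 - A 0) * (C 0 - A 0) + (O 1 - A 1) * (C 1 - A 1))
      = (C 0 - A 0) ^ 2 + (C 1 - A 1) ^ 2 := by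
    linear_combination hOAB + hOBC
  -- E ≠ F
  have hEF : E ≠ F := by
    intro h
    have heq0 : tau * (C 0 - A 0) = tF * (B 0 - A 0) := by
      have h1 := htau 0
      rw [h] at h1
      linear_combination htF 0 - h1
    have heq1 : tau * (C 1 - A 1) = tF * (B 1 - A 1) := by
      have h1 := htau 1
      rw [h] at h1
      linear_combination htF 1 - h1
    have htau0 : tau * ((B 0 - A 0) * (C 1 - A 1) - (B 1 - A 1) * (C 0 - A 0)) = 0 := by
      linear_combination (B 0 - A 0) * heq1 - (B 1 - A 1) * heq0
    have : tau = 0 := by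
      rcases mul_eq_zero.mp htau0 with h' | h'
      · exact h'
      · exact absurd h' hchi
    apply hk
    rw [← htaug, this]
    ring
  -- parametrize P on line EF
  have hPcol : Collinear ℝ ({P, E, F} : Set (EuclideanSpace ℝ (Fin 2))) := by
    have hset : ({P, E, F} : Set (EuclideanSpace ℝ (Fin 2))) = {E, F, P} := by
      ext x; simp; tauto
    rw [hset]; exact hP1
  obtain ⟨u, hu⟩ := collinear_param hPcol hEF
  -- P lies on the circle: scalar equation
  have hOP' : (O 0 - P 0) ^ 2 + (O 1 - P 1) ^ 2 = (O 0 - A 0) ^ 2 + (O 1 - A 1) ^ 2 := by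
    have h := congrArg (fun x : ℝ => x ^ 2) hP2
    simpa [dist_sq2] using h
  -- the line EF lies on the radical line: 2⟪o, x-A⟫ = k on it
  have h2oe : 2 * ((O 0 - A 0) * (E 0 - A 0) + (O 1 - A 1) * (E 1 - A 1))
      = (B 0 - A 0) * (C 0 - A 0) + (B 1 - A 1) * (C 1 - A 1) := by
    linear_combination 2 * (O 0 - A 0) * htau 0 + 2 * (O 1 - A 1) * htau 1
      + tau * ho_c + htaug
  have h2of : 2 * ((O 0 - A 0) * (F 0 - A 0) + (O 1 - A 1) * (F 1 - A 1))
      = (B 0 - A 0) * (C 0 - A 0) + (B 1 - A 1) * (C 1 - A 1) := by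
    linear_combination 2 * (O 0 - A 0) * htF 0 + 2 * (O 1 - A 1) * htF 1
      + tF * ho_b + htFb
  have hline : 2 * ((O 0 - A 0) * (P 0 - A 0) + (O 1 - A 1) * (P 1 - A 1))
      = (B 0 - A 0) * (C 0 - A 0) + (B 1 - A 1) * (C 1 - A 1) := by
    linear_combination 2 * (O 0 - A 0) * hu 0 + 2 * (O 1 - A 1) * hu 1
      + (1 - u) * h2oe + u * h2of
  -- |AP|² = k
  have hppk : (P 0 - A 0) ^ 2 + (P 1 - A 1) ^ 2
      = (B 0 - A 0) * (C 0 - A 0) + (B 1 - A 1) * (C 1 - A 1) := by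
    linear_combination hOP' + hline
  -- B ≠ P
  have hBP : B ≠ P := by
    intro h
    apply hR
    have h0 : B 0 - A 0 = P 0 - A 0 := by rw [h]
    have h1 : B 1 - A 1 = P 1 - A 1 := by rw [h]
    linear_combination hppk + (B 0 - A 0 + (P 0 - A 0)) * h0 + (B 1 - A 1 + (P 1 - A 1)) * h1
  -- parametrize Q on line BP
  have hQcol : Collinear ℝ ({Q, B, P} : Set (EuclideanSpace ℝ (Fin 2))) := by
    have hset : ({Q, B, P} : Set (EuclideanSpace ℝ (Fin 2))) = {B, P, Q} := by
      ext x; simp; tauto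
    rw [hset]; exact hQ1
  obtain ⟨s, hs⟩ := collinear_param hQcol hBP
  -- Q, D, F collinear: cross product equation
  have hcross : (F 0 - D 0) * (Q 1 - D 1) - (F 1 - D 1) * (Q 0 - D 0) = 0 :=
    collinear_cross hQ2
  have hH2X : ((P 0 - A 0) * (C 1 - A 1) - (P 1 - A 1) * (C 0 - A 0)) * ((B 0 - A 0) ^ 2 + (B 1 - A 1) ^ 2)
      + ((B 0 - A 0) * (P 1 - A 1) - (B 1 - A 1) * (P 0 - A 0)) * ((C 0 - A 0) ^ 2 + (C 1 - A 1) ^ 2)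
      = ((B 0 - A 0) * (C 0 - A 0) + (B 1 - A 1) * (C 1 - A 1))
        * ((B 0 - A 0) * (C 1 - A 1) - (B 1 - A 1) * (C 0 - A 0)) := by
    linear_combination (-((P 0 - A 0) * (C 1 - A 1) - (P 1 - A 1) * (C 0 - A 0))) * ho_b
      + (-((B 0 - A 0) * (P 1 - A 1) - (B 1 - A 1) * (P 0 - A 0))) * ho_c
      + ((B 0 - A 0) * (C 1 - A 1) - (B 1 - A 1) * (C 0 - A 0)) * hline
  -- apply the scalar computation
  have haux := aq_calc (B 0 - A 0) (B 1 - A 1) (C 0 - A 0) (C 1 - A 1)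
    (P 0 - A 0) (P 1 - A 1) (D 0 - A 0) (D 1 - A 1) (F 0 - A 0) (F 1 - A 1)
    (Q 0 - A 0) (Q 1 - A 1) tD tF s
    hR hdelta hchi
    (by linear_combination htDd)
    (by linear_combination htD 0) (by linear_combination htD 1)
    (by linear_combination htF 0) (by linear_combination htF 1)
    (by linear_combination htFb)
    (by linear_combination hs 0) (by linear_combination hs 1)
    (by linear_combination hcross)
    (by linear_combination hppk)
    (by linear_combination hH2X)
  -- final distance computations
  have hdAP : dist A P ^ 2 = (B 0 - A 0) * (C 0 - A 0) + (B 1 - A 1) * (C 1 - A 1) := by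
    rw [dist_sq2]
    linear_combination hppk
  have hdAQ : dist A Q ^ 2 = (B 0 - A 0) * (C 0 - A 0) + (B 1 - A 1) * (C 1 - A 1) := by
    rw [dist_sq2]
    linear_combination haux
  have hsq : dist A P ^ 2 = dist A Q ^ 2 := by rw [hdAP, hdAQ]
  rw [← Real.sqrt_sq (dist_nonneg : (0:ℝ) ≤ dist A P),
    ← Real.sqrt_sq (dist_nonneg : (0:ℝ) ≤ dist A Q), hsq]
end

section
/- In the configuration of IMO 2010 shortlist G1 (acute triangle ABC with altitude feet D, E, F; P on line EF and on the circumcircle; Q = BP ∩ DF), the four points A, F, P, Q are concyclic. -/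
open RealInnerProductSpace EuclideanGeometry

noncomputable instance : Fact (Module.finrank ℝ (EuclideanSpace ℝ (Fin 2)) = 2) := ⟨by simp⟩
noncomputable instance : Module.Oriented ℝ (EuclideanSpace ℝ (Fin 2)) (Fin 2) :=
  ⟨Module.Basis.orientation (EuclideanSpace.basisFun (Fin 2) ℝ).toBasis⟩

set_option maxHeartbeats 1000000 in
private abbrev Pt := EuclideanSpace ℝ (Fin 2)

private lemma c3 {s t : Set Pt} (h : Collinear ℝ t) (hs : s ⊆ t) : Collinear ℝ s :=
  Collinear.subset hs h

private lemma glue4 {a b c p : Pt} (h : Collinear ℝ ({a, b, c} : Set Pt)) (hab : a ≠ b)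
    (h2 : Collinear ℝ ({p, a, b} : Set Pt)) : Collinear ℝ ({p, a, b, c} : Set Pt) :=
  (h.collinear_insert_iff_of_ne (Set.mem_insert a _)
    (Set.mem_insert_of_mem a (Set.mem_insert b _)) hab).2 h2

private lemma lemThales {x a c : Pt} (h : ⟪x - a, x - c⟫ = 0) :
    dist ((2⁻¹ : ℝ) • (a + c)) x = dist ((2⁻¹ : ℝ) • (a + c)) a := by
  have h2 : ‖(x - a) + (x - c)‖ ^ 2 = ‖(x - a) - (x - c)‖ ^ 2 := by
    rw [norm_add_sq_real (x - a) (x - c), norm_sub_sq_real (x - a) (x - c), h]; ring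
  have key : ‖(x - a) + (x - c)‖ = ‖(x - a) - (x - c)‖ := by
    have := congrArg Real.sqrt h2
    rwa [Real.sqrt_sq (norm_nonneg _), Real.sqrt_sq (norm_nonneg _)] at this
  have e1 : (2⁻¹ : ℝ) • (a + c) - x = (-(2⁻¹ : ℝ)) • ((x - a) + (x - c)) := by module
  have e2 : (2⁻¹ : ℝ) • (a + c) - a = (2⁻¹ : ℝ) • ((x - a) - (x - c)) := by module
  rw [dist_eq_norm, dist_eq_norm, e1, e2, norm_smul, norm_smul, key]
  simp

private lemma lemLC {o a b p : Pt} (hab : a ≠ b) (h : Collinear ℝ ({a, b, p} : Set Pt))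
    (hoab : dist o a = dist o b) (hop : dist o p = dist o a) : p = a ∨ p = b := by
  obtain ⟨v, hv⟩ := (collinear_iff_of_mem (Set.mem_insert a {b, p})).1 h
  obtain ⟨tb, hb⟩ := hv b (by simp)
  obtain ⟨tp, hp⟩ := hv p (by simp)
  rw [vadd_eq_add] at hb hp
  have hvne : tb • v ≠ 0 := by
    intro h0
    exact hab (by rw [hb, h0, zero_add])
  have htb : tb ≠ 0 := fun h0 => hvne (by rw [h0, zero_smul])
  have hv0 : v ≠ 0 := fun h0 => hvne (by rw [h0, smul_zero])
  have Eb : ⟪o - b, o - b⟫ = ⟪o - a, o - a⟫ := by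
    rw [real_inner_self_eq_norm_sq, real_inner_self_eq_norm_sq, ← dist_eq_norm, ← dist_eq_norm,
      ← hoab]
  have Ep : ⟪o - p, o - p⟫ = ⟪o - a, o - a⟫ := by
    rw [real_inner_self_eq_norm_sq, real_inner_self_eq_norm_sq, ← dist_eq_norm, ← dist_eq_norm,
      hop]
  rw [show o - b = (o - a) - tb • v by rw [hb]; module] at Eb
  rw [show o - p = (o - a) - tp • v by rw [hp]; module] at Ep
  simp only [inner_sub_left, inner_sub_right, real_inner_smul_left, real_inner_smul_right] at Eb Ep
  rw [real_inner_comm v o, real_inner_comm v a] at Eb Ep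
  have hv2 : ⟪v, v⟫ ≠ 0 := inner_self_ne_zero.2 hv0
  have key : tb * (tp * ((tp - tb) * ⟪v, v⟫)) = 0 := by linear_combination tb * Ep - tp * Eb
  rcases mul_eq_zero.1 key with h0 | key
  · exact absurd h0 htb
  rcases mul_eq_zero.1 key with h0 | key
  · left; rw [hp, h0, zero_smul, zero_add]
  rcases mul_eq_zero.1 key with h0 | h0
  · right; rw [hp, sub_eq_zero.1 h0, hb]
  · exact absurd h0 hv2

set_option maxHeartbeats 2000000 in
theorem imo2010_sl_g1_concyclic (A B C D E F O P Q : EuclideanSpace ℝ (Fin 2))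
    (hABC : AffineIndependent ℝ ![A, B, C])
    (hacute : ∠ B A C < Real.pi / 2 ∧ ∠ A B C < Real.pi / 2 ∧ ∠ B C A < Real.pi / 2)
    (hD : D ∈ affineSpan ℝ ({B, C} : Set (EuclideanSpace ℝ (Fin 2))) ∧ ⟪A - D, C - B⟫ = 0)
    (hE : E ∈ affineSpan ℝ ({C, A} : Set (EuclideanSpace ℝ (Fin 2))) ∧ ⟪B - E, A - C⟫ = 0)
    (hF : F ∈ affineSpan ℝ ({A, B} : Set (EuclideanSpace ℝ (Fin 2))) ∧ ⟪C - F, B - A⟫ = 0)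
    (hO : dist O A = dist O B ∧ dist O B = dist O C)
    (hP : Collinear ℝ {E, F, P} ∧ dist O P = dist O A)
    (hQ : Collinear ℝ {B, P, Q} ∧ Collinear ℝ {D, F, Q}) :
    ∃ X : EuclideanSpace ℝ (Fin 2),
      dist X A = dist X F ∧ dist X F = dist X P ∧ dist X P = dist X Q := by
  obtain ⟨haA, haB, haC⟩ := hacute
  have hncol : ¬Collinear ℝ ({A, B, C} : Set Pt) :=
    affineIndependent_iff_not_collinear_set.1 hABC
  -- distinctness of A B C
  have hAB : A ≠ B := by
    intro h; apply hncol; rw [h]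
    exact c3 (collinear_pair ℝ B C) (by intro x hx; simp at hx ⊢; tauto)
  have hAC : A ≠ C := by
    intro h; apply hncol; rw [h]
    exact c3 (collinear_pair ℝ C B) (by intro x hx; simp at hx ⊢; tauto)
  have hBC : B ≠ C := by
    intro h; apply hncol; rw [h]
    exact c3 (collinear_pair ℝ A C) (by intro x hx; simp at hx ⊢; tauto)
  -- non-perpendicularity from acuteness
  have hnpA : ⟪B - A, C - A⟫ ≠ 0 := by
    intro h
    have h' : ∠ B A C = Real.pi / 2 :=
      (InnerProductGeometry.inner_eq_zero_iff_angle_eq_pi_div_two (B - A) (C - A)).1 h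
    rw [h'] at haA; exact lt_irrefl _ haA
  have hnpB : ⟪A - B, C - B⟫ ≠ 0 := by
    intro h
    have h' : ∠ A B C = Real.pi / 2 :=
      (InnerProductGeometry.inner_eq_zero_iff_angle_eq_pi_div_two (A - B) (C - B)).1 h
    rw [h'] at haB; exact lt_irrefl _ haB
  have hnpC : ⟪B - C, A - C⟫ ≠ 0 := by
    intro h
    have h' : ∠ B C A = Real.pi / 2 :=
      (InnerProductGeometry.inner_eq_zero_iff_angle_eq_pi_div_two (B - C) (A - C)).1 h
    rw [h'] at haC; exact lt_irrefl _ haC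
  -- feet are distinct from the relevant vertices
  have hFA : F ≠ A := by
    intro h
    apply hnpA
    have h2 := hF.2
    rw [h] at h2
    rw [real_inner_comm]
    exact h2
  have hFB : F ≠ B := by
    intro h
    apply hnpB
    have h2 := hF.2
    rw [h] at h2
    rw [real_inner_comm, show A - B = -(B - A) by module, inner_neg_right, h2, neg_zero]
  have hEA : E ≠ A := by
    intro h
    apply hnpA
    have h2 := hE.2
    rw [h] at h2
    rw [show C - A = -(A - C) by module, inner_neg_right, h2, neg_zero]
  have hEC : E ≠ C := by
    intro h
    apply hnpC
    have h2 := hE.2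
    rw [h] at h2
    exact h2
  have hDB : D ≠ B := by
    intro h
    apply hnpB
    have h2 := hD.2
    rw [h] at h2
    exact h2
  have hDC : D ≠ C := by
    intro h
    apply hnpC
    have h2 := hD.2
    rw [h] at h2
    rw [real_inner_comm, show B - C = -(C - B) by module, inner_neg_right, h2, neg_zero]
  -- basic collinearity facts
  have cDBC : Collinear ℝ ({D, B, C} : Set Pt) := collinear_insert_of_mem_affineSpan_pair hD.1
  have cECA : Collinear ℝ ({E, C, A} : Set Pt) := collinear_insert_of_mem_affineSpan_pair hE.1
  have cFAB : Collinear ℝ ({F, A, B} : Set Pt) := collinear_insert_of_mem_affineSpan_pair hF.1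
  -- P is distinct from A and B
  have hPA : P ≠ A := by
    rintro rfl
    have cEFP : Collinear ℝ ({E, F, P} : Set Pt) := hP.1
    have g1 : Collinear ℝ ({F, E, P, C} : Set Pt) :=
      glue4 (c3 cECA (by intro x hx; simp at hx ⊢; tauto)) hEA
        (c3 cEFP (by intro x hx; simp at hx ⊢; tauto))
    have g2 : Collinear ℝ ({B, F, P, C} : Set Pt) :=
      glue4 (c3 g1 (by intro x hx; simp at hx ⊢; tauto)) hFA
        (c3 cFAB (by intro x hx; simp at hx ⊢; tauto))
    exact hncol (c3 g2 (by intro x hx; simp at hx ⊢; tauto))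
  have hPB : P ≠ B := by
    rintro rfl
    have cEFP : Collinear ℝ ({E, F, P} : Set Pt) := hP.1
    have g1 : Collinear ℝ ({A, F, P, E} : Set Pt) :=
      glue4 (c3 cEFP (by intro x hx; simp at hx ⊢; tauto)) hFB
        (c3 cFAB (by intro x hx; simp at hx ⊢; tauto))
    have g2 : Collinear ℝ ({C, E, A, P} : Set Pt) :=
      glue4 (c3 g1 (by intro x hx; simp at hx ⊢; tauto)) hEA
        (c3 cECA (by intro x hx; simp at hx ⊢; tauto))
    exact hncol (c3 g2 (by intro x hx; simp at hx ⊢; tauto))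
  -- Q ≠ F
  have hQF : Q ≠ F := by
    rintro rfl
    have cBPQ : Collinear ℝ ({B, P, Q} : Set Pt) := hQ.1
    have g1 : Collinear ℝ ({P, Q, B, A} : Set Pt) :=
      glue4 (c3 cFAB (by intro x hx; simp at hx ⊢; tauto)) (hFB : Q ≠ B)
        (c3 cBPQ (by intro x hx; simp at hx ⊢; tauto))
    have : Collinear ℝ ({A, B, P} : Set Pt) := c3 g1 (by intro x hx; simp at hx ⊢; tauto)
    rcases lemLC hAB this hO.1 hP.2 with h | h
    · exact hPA h
    · exact hPB h
  -- F ≠ D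
  have hFD : F ≠ D := by
    rintro rfl
    have g1 : Collinear ℝ ({A, F, B, C} : Set Pt) :=
      glue4 (c3 cDBC (by intro x hx; simp at hx ⊢; tauto)) hFB
        (c3 cFAB (by intro x hx; simp at hx ⊢; tauto))
    exact hncol (c3 g1 (by intro x hx; simp at hx ⊢; tauto))
  -- Thales circle with diameter AC contains F and D
  have pF : ⟪F - A, F - C⟫ = 0 := by
    have hF1 := hF.1
    rw [show F = (F - A) +ᵥ A by simp [vadd_eq_add], vadd_left_mem_affineSpan_pair] at hF1
    obtain ⟨r, hr⟩ := hF1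
    rw [vsub_eq_sub] at hr
    rw [← hr, real_inner_smul_left]
    have : ⟪B - A, F - C⟫ = 0 := by
      rw [show F - C = -(C - F) by module, inner_neg_right, real_inner_comm, hF.2, neg_zero]
    rw [this, mul_zero]
  have pD : ⟪D - A, D - C⟫ = 0 := by
    have hD1 := hD.1
    rw [show D = (D - B) +ᵥ B by simp [vadd_eq_add], vadd_left_mem_affineSpan_pair] at hD1
    obtain ⟨t, ht⟩ := hD1
    rw [vsub_eq_sub] at ht
    have hDC' : D - C = (t - 1) • (C - B) := by
      rw [show D - C = (D - B) - (C - B) by module, ← ht]; module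
    rw [hDC', real_inner_smul_right]
    have : ⟪D - A, C - B⟫ = 0 := by
      rw [show D - A = -(A - D) by module, inner_neg_left, hD.2, neg_zero]
    rw [this, mul_zero]
  set M : Pt := (2⁻¹ : ℝ) • (A + C) with hM
  have dF : dist M F = dist M A := lemThales pF
  have dD : dist M D = dist M A := lemThales pD
  have dC : dist M C = dist M A := lemThales (by simp)
  -- the two spheres
  set S1 : Sphere Pt := ⟨O, dist O A⟩ with hS1
  set S2 : Sphere Pt := ⟨M, dist M A⟩ with hS2
  have mA1 : A ∈ S1 := by rw [EuclideanGeometry.mem_sphere]; exact dist_comm A O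
  have mB1 : B ∈ S1 := by rw [EuclideanGeometry.mem_sphere]; rw [dist_comm]; exact hO.1.symm
  have mC1 : C ∈ S1 := by
    rw [EuclideanGeometry.mem_sphere, dist_comm]; exact (hO.1.trans hO.2).symm
  have mP1 : P ∈ S1 := by rw [EuclideanGeometry.mem_sphere, dist_comm]; exact hP.2
  have mA2 : A ∈ S2 := by rw [EuclideanGeometry.mem_sphere]; exact dist_comm A M
  have mC2 : C ∈ S2 := by rw [EuclideanGeometry.mem_sphere, dist_comm]; exact dC
  have mF2 : F ∈ S2 := by rw [EuclideanGeometry.mem_sphere, dist_comm]; exact dF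
  have mD2 : D ∈ S2 := by rw [EuclideanGeometry.mem_sphere, dist_comm]; exact dD
  -- case split on Q = P
  by_cases hQP : Q = P
  · -- Q = P : just need circle through A, F, P
    subst hQP
    have hnAFQ : ¬Collinear ℝ ({A, F, Q} : Set Pt) := by
      intro hc
      have g1 : Collinear ℝ ({Q, F, A, B} : Set Pt) :=
        glue4 (c3 cFAB (by intro x hx; simp at hx ⊢; tauto)) hFA
          (c3 hc (by intro x hx; simp at hx ⊢; tauto))
      have : Collinear ℝ ({A, B, Q} : Set Pt) := c3 g1 (by intro x hx; simp at hx ⊢; tauto)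
      rcases lemLC hAB this hO.1 hP.2 with h | h
      · exact hPA h
      · exact hPB h
    have hai : AffineIndependent ℝ ![A, F, Q] := affineIndependent_iff_not_collinear_set.2 hnAFQ
    set T : Affine.Triangle ℝ Pt := ⟨![A, F, Q], hai⟩ with hT
    have hA' : dist A T.circumsphere.center = T.circumsphere.radius := by
      have h0 := T.mem_circumsphere 0
      rw [EuclideanGeometry.mem_sphere] at h0
      simpa [hT, Matrix.cons_val_zero] using h0
    have hF' : dist F T.circumsphere.center = T.circumsphere.radius := by
      have h1 := T.mem_circumsphere 1
      rw [EuclideanGeometry.mem_sphere] at h1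
      simpa [hT, Matrix.cons_val_one, Matrix.head_cons] using h1
    have hQ' : dist Q T.circumsphere.center = T.circumsphere.radius := by
      have h2 := T.mem_circumsphere 2
      rw [EuclideanGeometry.mem_sphere] at h2
      simpa [hT] using h2
    refine ⟨T.circumsphere.center, ?_, ?_, rfl⟩
    · rw [dist_comm _ A, dist_comm _ F, hA', hF']
    · rw [dist_comm _ F, dist_comm _ Q, hF', hQ']
  · -- main case
    have r2 : (2 : ℤ) • ∡ A F Q = (2 : ℤ) • ∡ A F D :=
      Collinear.two_zsmul_oangle_eq_right
        (c3 hQ.2 (by intro x hx; simp at hx ⊢; tauto)) hQF (Ne.symm hFD)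
    have h2 : (2 : ℤ) • ∡ A F D = (2 : ℤ) • ∡ A C D :=
      Sphere.two_zsmul_oangle_eq mA2 mF2 mC2 mD2 hFA hFD (Ne.symm hAC) (Ne.symm hDC)
    have r1 : (2 : ℤ) • ∡ A C D = (2 : ℤ) • ∡ A C B :=
      Collinear.two_zsmul_oangle_eq_right
        (c3 cDBC (by intro x hx; simp at hx ⊢; tauto)) hDC hBC
    have h4 : (2 : ℤ) • ∡ A C B = (2 : ℤ) • ∡ A P B :=
      Sphere.two_zsmul_oangle_eq mA1 mC1 mP1 mB1 (Ne.symm hAC) hBC.symm hPA hPB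
    have r3 : (2 : ℤ) • ∡ A P B = (2 : ℤ) • ∡ A P Q :=
      Collinear.two_zsmul_oangle_eq_right hQ.1 (Ne.symm hPB) hQP
    have hchain : (2 : ℤ) • ∡ A F Q = (2 : ℤ) • ∡ A P Q :=
      ((((r2.trans h2).trans r1).trans h4).trans r3)
    have hnAFQ : ¬Collinear ℝ ({A, F, Q} : Set Pt) := by
      intro hc
      have g1 : Collinear ℝ ({Q, A, F, B} : Set Pt) :=
        glue4 (c3 cFAB (by intro x hx; simp at hx ⊢; tauto)) (Ne.symm hFA)
          (c3 hc (by intro x hx; simp at hx ⊢; tauto))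
      have g2 : Collinear ℝ ({D, F, Q, A} : Set Pt) :=
        glue4 (c3 g1 (by intro x hx; simp at hx ⊢; tauto)) (Ne.symm hQF) hQ.2
      have g3 : Collinear ℝ ({D, F, Q, B} : Set Pt) :=
        glue4 (c3 g1 (by intro x hx; simp at hx ⊢; tauto)) (Ne.symm hQF) hQ.2
      have g4 : Collinear ℝ ({B, D, F, A} : Set Pt) :=
        glue4 (c3 g2 (by intro x hx; simp at hx ⊢; tauto)) (Ne.symm hFD)
          (c3 g3 (by intro x hx; simp at hx ⊢; tauto))
      have g5 : Collinear ℝ ({C, D, B, A} : Set Pt) :=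
        glue4 (c3 g4 (by intro x hx; simp at hx ⊢; tauto)) hDB
          (c3 cDBC (by intro x hx; simp at hx ⊢; tauto))
      exact hncol (c3 g5 (by intro x hx; simp at hx ⊢; tauto))
    have hcos : Cospherical ({A, F, P, Q} : Set Pt) :=
      cospherical_of_two_zsmul_oangle_eq_of_not_collinear hchain hnAFQ
    obtain ⟨ctr, rad, hcr⟩ := hcos
    refine ⟨ctr, ?_, ?_, ?_⟩
    · rw [dist_comm ctr A, dist_comm ctr F, hcr A (by simp), hcr F (by simp)]
    · rw [dist_comm ctr F, dist_comm ctr P, hcr F (by simp), hcr P (by simp)]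
    · rw [dist_comm ctr P, dist_comm ctr Q, hcr P (by simp), hcr Q (by simp)]
end
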